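/- Let G be a locally nilpotent group, π a finite set of primes, and n the product of the primes in π. Assume that a π-subgroup H of G'Gⁿ is an Inn-basis of G, where G' is the derived subgroup and Gⁿ is the subgroup generated by all n-th powers. If either G is hypercentral or H is finite, then G is abelian. -/

import Mathlib

universe u

theorem Subgroup.normal_iSup_of_normal {G : Type u} [Group G] {ι : Sort*}
    (f : ι → Subgroup G) (h : ∀ i, (f i).Normal) : (⨆ i, f i).Normal := by
  constructor
  intro x hx g
  refine Subgroup.iSup_induction (C := fun y => g * y * g⁻¹ ∈ ⨆ i, f i) f hx
    (fun i y hy => le_iSup f i ((h i).conj_mem y hy g)) (by simpa using Subgroup.one_mem _) ?_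
  intro a b ha hb
  have hab : g * (a * b) * g⁻¹ = (g * a * g⁻¹) * (g * b * g⁻¹) := by group
  rw [hab]; exact mul_mem ha hb

/-- The transfinite upper central series of a group, as ordinal-indexed normal subgroups. -/
noncomputable def transUpperCentralSeriesAux (G : Type u) [Group G] :
    Ordinal.{u} → {H : Subgroup G // H.Normal} := fun o =>
  Ordinal.limitRecOn o
    ⟨⊥, inferInstance⟩
    (fun _ Z => ⟨@Subgroup.upperCentralSeriesStep G _ Z.1 Z.2, by
      haveI := Z.2; rw [Subgroup.upperCentralSeriesStep_eq_comap_center]; infer_instance⟩)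
    (fun o _ ih => ⟨⨆ (o' : Ordinal.{u}) (ho' : o' < o), (ih o' ho').1,
      Subgroup.normal_iSup_of_normal _ fun o' =>
        Subgroup.normal_iSup_of_normal _ fun ho' => (ih o' ho').2⟩)

/-- The transfinite upper central series. -/
noncomputable def transUpperCentralSeries (G : Type u) [Group G] (o : Ordinal.{u}) :
    Subgroup G := (transUpperCentralSeriesAux G o).1

/-- The hypercentre of a group: the union of the transfinite upper central series. -/
noncomputable def hypercenter (G : Type u) [Group G] : Subgroup G :=
  ⨆ o : Ordinal.{u}, transUpperCentralSeries G o

/-- A group is hypercentral if it equals the union of its transfinite upper central series. -/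
def IsHypercentral (G : Type u) [Group G] : Prop := hypercenter G = ⊤

/-- The hypercentral length: the least ordinal `o` with `Z_o(G) = G`. -/
noncomputable def hypercentralLength (G : Type u) [Group G] : Ordinal.{u} :=
  sInf {o : Ordinal.{u} | transUpperCentralSeries G o = ⊤}

/-- A group is locally nilpotent if every finitely generated subgroup is nilpotent. -/
def IsLocallyNilpotent (G : Type*) [Group G] : Prop :=
  ∀ S : Subgroup G, S.FG → Group.IsNilpotent S

/-!
Put `n = ∏ p ∈ π, p`, so that the `π`-elements are those killed by a power of `n`. In a locally
nilpotent group they form a normal subgroup `K`, which contains `H`. Suppose `k ∈ K` and every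
commutator `⁅k, y⁆` is central. Then `y ↦ ⁅k, y⁆` is a homomorphism into the centre; it kills `G'`,
and it kills every `x ^ n` once `k ^ n` is central, because `⁅k, x⁆ ^ n = ⁅x, k ^ n⁆⁻¹`. So `k`
centralizes `H ≤ G'Gⁿ` and is central by the Inn-basis property. Running this down the chain
`k, k ^ n, k ^ (n ^ 2), …`, which ends in `1`, shows that `K ∩ Z_α ≤ Z(G)` implies
`K ∩ Z_{α+1} ≤ Z(G)`; by transfinite induction `H ≤ Z(G)` when `G` is hypercentral. When `H` is
finite, it lies in `M'Mⁿ` for some finitely generated, hence nilpotent, subgroup `M` containing it,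
and the same argument in `M` makes `H` abelian, so again `H ≤ C_G(H) = Z(G)`. Finally `H ≤ Z(G)`
gives `Z(G) = C_G(H) = G`.
-/

open Subgroup
open scoped commutatorElement

section PowTorsion

variable {G : Type*} [Group G] {n : ℕ}

/-- For `n = ∏ p ∈ π, p` these are exactly the `π`-elements. -/
def IsPowTorsion (n : ℕ) (x : G) : Prop :=
  ∃ j, x ^ n ^ j = 1

theorem isPowTorsion_one : IsPowTorsion n (1 : G) :=
  ⟨0, one_pow _⟩

theorem IsPowTorsion.inv {x : G} (hx : IsPowTorsion n x) : IsPowTorsion n x⁻¹ :=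
  let ⟨j, hj⟩ := hx
  ⟨j, by rw [inv_pow, hj, inv_one]⟩

theorem IsPowTorsion.mul_of_commute {x y : G} (hxy : Commute x y) (hx : IsPowTorsion n x)
    (hy : IsPowTorsion n y) : IsPowTorsion n (x * y) := by
  obtain ⟨i, hi⟩ := hx
  obtain ⟨j, hj⟩ := hy
  refine ⟨i + j, ?_⟩
  rw [hxy.mul_pow, pow_add, pow_mul, hi, one_pow, one_mul, mul_comm, pow_mul, hj, one_pow]

theorem IsPowTorsion.map {G' : Type*} [Group G'] (f : G →* G') {x : G} (hx : IsPowTorsion n x) :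
    IsPowTorsion n (f x) :=
  let ⟨j, hj⟩ := hx
  ⟨j, by rw [← map_pow, hj, map_one]⟩

theorem IsPowTorsion.of_pow {x : G} {i : ℕ} (hx : IsPowTorsion n (x ^ n ^ i)) :
    IsPowTorsion n x :=
  let ⟨j, hj⟩ := hx
  ⟨i + j, by rwa [pow_add, pow_mul]⟩

theorem Subgroup.isPowTorsion_coe {M : Subgroup G} {x : M} :
    IsPowTorsion n (x : G) ↔ IsPowTorsion n x := by
  simp only [IsPowTorsion, ← Subgroup.coe_pow, OneMemClass.coe_eq_one]

theorem isPowTorsion_prod_of_orderOf {π : Finset ℕ} {x : G} (hx : IsOfFinOrder x)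
    (hπ : ∀ p : ℕ, p.Prime → p ∣ orderOf x → p ∈ π) : IsPowTorsion (∏ p ∈ π, p) x := by
  refine ⟨orderOf x, orderOf_dvd_iff_pow_eq_one.mp ?_⟩
  have hsub : (orderOf x).primeFactors ⊆ π := fun p hp =>
    hπ p (Nat.prime_of_mem_primeFactors hp) (Nat.dvd_of_mem_primeFactors hp)
  exact (Nat.dvd_prod_primeFactors_pow_self hx.orderOf_pos.ne').trans
    (pow_dvd_pow_of_dvd (Finset.prod_dvd_prod_of_subset _ _ _ hsub) _)

theorem isPowTorsion_of_mem_closure_of_subset_center {S : Set G} (hS : S ⊆ center G)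
    (hST : ∀ s ∈ S, IsPowTorsion n s) {x : G} (hx : x ∈ closure S) : IsPowTorsion n x := by
  have hcen : closure S ≤ center G := (closure_le _).mpr hS
  induction hx using closure_induction with
  | mem s hs => exact hST s hs
  | one => exact isPowTorsion_one
  | mul a b ha _ hta htb => exact hta.mul_of_commute (mem_center_iff.mp (hcen ha) b).symm htb
  | inv a _ hta => exact hta.inv

theorem isPowTorsion_of_quotient (N : Subgroup G) [N.Normal] (hN : ∀ x ∈ N, IsPowTorsion n x)
    (hQ : ∀ q : G ⧸ N, IsPowTorsion n q) (x : G) : IsPowTorsion n x := by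
  obtain ⟨i, hi⟩ := hQ x
  refine IsPowTorsion.of_pow (i := i) (hN _ ?_)
  rwa [← QuotientGroup.eq_one_iff, QuotientGroup.mk_pow]

end PowTorsion

section CentralCommutator

variable {G : Type*} [Group G] {k : G}

def commutatorCentralHom (k : G) (hk : ∀ y, ⁅k, y⁆ ∈ center G) : G →* center G where
  toFun y := ⟨⁅k, y⁆, hk y⟩
  map_one' := Subtype.ext (commutatorElement_one_right k)
  map_mul' y z := Subtype.ext <| by
    change ⁅k, y * z⁆ = ⁅k, y⁆ * ⁅k, z⁆
    rw [commutatorElement_mul_right_eq_mul_conj, mul_assoc _ y, mem_center_iff.mp (hk z) y]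
    group

theorem commutatorElement_pow_right_of_central (hk : ∀ y, ⁅k, y⁆ ∈ center G) (y : G) (m : ℕ) :
    ⁅k, y ^ m⁆ = ⁅k, y⁆ ^ m :=
  congrArg Subtype.val (map_pow (commutatorCentralHom k hk) y m)

theorem commutatorElement_pow_eq_one_of_pow_mem_center {n : ℕ} (hk : ∀ y, ⁅k, y⁆ ∈ center G)
    (hkn : k ^ n ∈ center G) (x : G) : ⁅k, x⁆ ^ n = 1 := by
  have hconj : x * k * x⁻¹ = ⁅k, x⁆⁻¹ * k := by
    rw [commutatorElement_def]
    group
  have hcomm : Commute ⁅k, x⁆⁻¹ k := (mem_center_iff.mp (inv_mem (hk x)) k).symm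
  have h : ⁅k, x⁆⁻¹ ^ n * k ^ n = k ^ n := by
    rw [← hcomm.mul_pow, ← hconj, conj_pow, mem_center_iff.mp hkn x, mul_inv_cancel_right]
  rwa [mul_eq_right, inv_pow, inv_eq_one] at h

end CentralCommutator

namespace Subgroup

variable {G : Type*} [Group G]

/-- The subgroup `M'Mⁿ`. -/
def derivedPow (M : Subgroup G) (n : ℕ) : Subgroup G :=
  ⁅M, M⁆ ⊔ closure ((· ^ n) '' M)

theorem derivedPow_mono (n : ℕ) : Monotone fun M : Subgroup G => M.derivedPow n :=
  fun _ _ h => sup_le_sup (commutator_mono h h) (closure_mono (Set.image_mono h))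

theorem derivedPow_top (n : ℕ) :
    (⊤ : Subgroup G).derivedPow n = _root_.commutator G ⊔ closure {g | ∃ x, x ^ n = g} := by
  rw [derivedPow, coe_top, Set.image_univ]
  rfl

theorem map_subtype_derivedPow_top (M : Subgroup G) (n : ℕ) :
    ((⊤ : Subgroup M).derivedPow n).map M.subtype = M.derivedPow n := by
  have hpow : M.subtype ∘ (· ^ n) = (· ^ n) ∘ M.subtype := funext fun x => M.coe_pow x n
  rw [derivedPow, derivedPow, map_sup, map_commutator, MonoidHom.map_closure,
    ← MonoidHom.range_eq_map, range_subtype, coe_top, Set.image_univ, ← Set.range_comp, hpow,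
    Set.range_comp, coe_subtype, Subtype.range_coe]

theorem derivedPow_top_le_iSup_closure_finset (n : ℕ) :
    (⊤ : Subgroup G).derivedPow n ≤ ⨆ F : Finset G, (closure (F : Set G)).derivedPow n := by
  classical
  refine sup_le (commutator_le.mpr fun a _ b _ => ?_) ((closure_le _).mpr ?_)
  · refine le_iSup (fun F : Finset G => (closure (F : Set G)).derivedPow n) {a, b}
      (mem_sup_left (commutator_mem_commutator ?_ ?_)) <;> exact subset_closure (by simp)
  · rintro _ ⟨x, -, rfl⟩
    exact le_iSup (fun F : Finset G => (closure (F : Set G)).derivedPow n) {x}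
      (mem_sup_right (subset_closure ⟨x, subset_closure (by simp), rfl⟩))

theorem exists_finset_mem_derivedPow_closure {n : ℕ} {g : G}
    (hg : g ∈ (⊤ : Subgroup G).derivedPow n) :
    ∃ F : Finset G, g ∈ (closure (F : Set G)).derivedPow n := by
  have hdir : Directed (· ≤ ·) fun F : Finset G => (closure (F : Set G)).derivedPow n :=
    Monotone.directed_le fun _ _ h => derivedPow_mono n (closure_mono (Finset.coe_subset.mpr h))
  exact (mem_iSup_of_directed hdir).mp (derivedPow_top_le_iSup_closure_finset n hg)

theorem exists_fg_le_derivedPow {H : Subgroup G} [Finite H] {n : ℕ}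
    (hH : H ≤ (⊤ : Subgroup G).derivedPow n) :
    ∃ M : Subgroup G, M.FG ∧ H ≤ M ∧ H ≤ M.derivedPow n := by
  choose F hF using fun h : H => exists_finset_mem_derivedPow_closure (hH h.2)
  let T : Set G := H ∪ ⋃ h : H, (F h : Set G)
  have hT : T.Finite := (Set.toFinite _).union (Set.finite_iUnion fun h => (F h).finite_toSet)
  refine ⟨closure T, (fg_iff _).mpr ⟨T, rfl, hT⟩, fun h hh => subset_closure (Or.inl hh),
    fun h hh => derivedPow_mono n (closure_mono fun x hx => ?_) (hF ⟨h, hh⟩)⟩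
  exact Or.inr (Set.mem_iUnion.mpr ⟨⟨h, hh⟩, hx⟩)

end Subgroup

section LocallyNilpotent

variable {n : ℕ}

theorem lowerCentralSeries_le_center {G : Type*} [Group G] {c : ℕ}
    (hc : (⊤ : Subgroup G).lowerCentralSeries (c + 1) = ⊥) :
    (⊤ : Subgroup G).lowerCentralSeries c ≤ center G := by
  rw [← centralizer_univ, ← coe_top]
  exact commutator_eq_bot_iff_le_centralizer.mp hc

theorem isPowTorsion_of_lowerCentralSeries_eq_bot (c : ℕ) {G : Type*} [Group G] {S : Set G}
    (hS : closure S = ⊤) (hST : ∀ s ∈ S, IsPowTorsion n s)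
    (hc : (⊤ : Subgroup G).lowerCentralSeries (c + 1) = ⊥) (x : G) : IsPowTorsion n x := by
  induction c generalizing G with
  | zero =>
    refine isPowTorsion_of_mem_closure_of_subset_center (fun s _ => ?_) hST (hS ▸ mem_top x)
    exact lowerCentralSeries_le_center hc (mem_top s)
  | succ c ih =>
    set A := (⊤ : Subgroup G).lowerCentralSeries (c + 1)
    have hA : A ≤ center G := lowerCentralSeries_le_center hc
    have hmk := QuotientGroup.mk'_surjective A
    have hQ : ∀ q : G ⧸ A, IsPowTorsion n q := by
      refine ih (S := QuotientGroup.mk' A '' S) ?_ ?_ ?_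
      · rw [← MonoidHom.map_closure, hS, map_top_of_surjective _ hmk]
      · rintro _ ⟨s, hs, rfl⟩
        exact (hST s hs).map _
      · rw [← map_top_of_surjective _ hmk, ← map_lowerCentralSeries, QuotientGroup.map_mk'_self]
    refine isPowTorsion_of_quotient A (fun a ha => ?_) hQ x
    refine isPowTorsion_of_mem_closure_of_subset_center ?_ ?_ ha
    · rintro _ ⟨u, hu, g, -, rfl⟩
      exact hA (commutator_mem_commutator hu (mem_top g))
    · rintro _ ⟨u, hu, g, -, rfl⟩
      obtain ⟨i, hi⟩ := hQ g
      have hgi : g ^ n ^ i ∈ A := by rwa [← QuotientGroup.eq_one_iff, QuotientGroup.mk_pow]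
      refine ⟨i, ?_⟩
      -- `⁅u, ·⁆` is a homomorphism, and `u` commutes with the central element `g ^ n ^ i`
      rw [← commutatorElement_pow_right_of_central
        (fun y => hA (commutator_mem_commutator hu (mem_top y))),
        commutatorElement_eq_one_iff_commute]
      exact mem_center_iff.mp (hA hgi) u

variable {G : Type*} [Group G]

theorem IsLocallyNilpotent.isPowTorsion_mul (hG : IsLocallyNilpotent G) {a b : G}
    (ha : IsPowTorsion n a) (hb : IsPowTorsion n b) : IsPowTorsion n (a * b) := by
  let N := closure ({a, b} : Set G)
  obtain ⟨c, hc⟩ :=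
    Subgroup.nilpotent_iff_lowerCentralSeries.mp (hG N ((fg_iff _).mpr ⟨_, rfl, Set.toFinite _⟩))
  have hc' : (⊤ : Subgroup N).lowerCentralSeries (c + 1) = ⊥ :=
    eq_bot_iff.mpr (hc ▸ Subgroup.lowerCentralSeries_antitone _ (Nat.le_succ c))
  have hgen : ∀ s ∈ ((↑) : N → G) ⁻¹' {a, b}, IsPowTorsion n s := by
    rintro s (hs | hs) <;> rw [← isPowTorsion_coe] <;> simp_all
  have hab := isPowTorsion_of_lowerCentralSeries_eq_bot c closure_closure_coe_preimage hgen hc'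
    (⟨a, subset_closure (by simp)⟩ * ⟨b, subset_closure (by simp)⟩)
  exact isPowTorsion_coe.mpr hab

def IsLocallyNilpotent.powTorsion (hG : IsLocallyNilpotent G) (n : ℕ) : Subgroup G where
  carrier := {x | IsPowTorsion n x}
  one_mem' := isPowTorsion_one
  mul_mem' := hG.isPowTorsion_mul
  inv_mem' := IsPowTorsion.inv

theorem IsLocallyNilpotent.powTorsion_normal (hG : IsLocallyNilpotent G) (n : ℕ) :
    (hG.powTorsion n).Normal :=
  ⟨fun _ hx g => hx.map (MulAut.conj g).toMonoidHom⟩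

end LocallyNilpotent

section InnBasis

variable {G : Type*} [Group G] {n : ℕ} {H K : Subgroup G}

theorem mem_center_of_commutator_mem_center (hH : H ≤ (⊤ : Subgroup G).derivedPow n)
    (hbasis : centralizer (H : Set G) ≤ center G) {k : G} (hk : ∀ y, ⁅k, y⁆ ∈ center G)
    (hkn : k ^ n ∈ center G) : k ∈ center G := by
  let φ := commutatorCentralHom k hk
  have hker : (⊤ : Subgroup G).derivedPow n ≤ φ.ker := by
    refine sup_le (commutator_le.mpr fun a _ b _ => ?_) ((closure_le _).mpr ?_)
    · rw [MonoidHom.mem_ker, map_commutatorElement, commutatorElement_eq_one_iff_mul_comm]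
      exact Subtype.ext (mem_center_iff.mp (φ b).2 (φ a))
    · rintro _ ⟨x, -, rfl⟩
      rw [SetLike.mem_coe, MonoidHom.mem_ker, map_pow]
      exact Subtype.ext (commutatorElement_pow_eq_one_of_pow_mem_center hk hkn x)
  refine hbasis (mem_centralizer_iff.mpr fun h hh => ?_)
  have hkh : ⁅k, h⁆ = 1 := congrArg Subtype.val (hker (hH hh))
  exact (commutatorElement_eq_one_iff_mul_comm.mp hkh).symm

variable [K.Normal] (hKT : ∀ k ∈ K, IsPowTorsion n k) (hH : H ≤ (⊤ : Subgroup G).derivedPow n)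
  (hbasis : centralizer (H : Set G) ≤ center G)
include hKT hH hbasis

theorem inf_le_center_of_commutator_mem {W W' : Subgroup G} (hW : ∀ x ∈ W', ∀ y, ⁅x, y⁆ ∈ W)
    (hKW : K ⊓ W ≤ center G) : K ⊓ W' ≤ center G := by
  suffices h : ∀ j, ∀ k ∈ K ⊓ W', k ^ n ^ j ∈ center G → k ∈ center G by
    intro k hk
    obtain ⟨j, hj⟩ := hKT k hk.1
    exact h j k hk (hj ▸ one_mem _)
  intro j
  induction j with
  | zero =>
    intro k _ hk
    rwa [pow_zero, pow_one] at hk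
  | succ j ih =>
    intro k hk hkj
    have hkn : k ^ n ∈ center G := ih (k ^ n) (pow_mem hk n) (by rwa [← pow_mul, ← pow_succ'])
    have hcomm (y : G) : ⁅k, y⁆ ∈ K ⊓ W := by
      refine ⟨?_, hW k hk.2 y⟩
      rw [show ⁅k, y⁆ = k * (y * k⁻¹ * y⁻¹) by group]
      exact mul_mem hk.1 (‹K.Normal›.conj_mem _ (inv_mem hk.1) y)
    exact mem_center_of_commutator_mem_center hH hbasis (fun y => hKW (hcomm y)) hkn

theorem inf_upperCentralSeries_le_center (i : ℕ) :
    K ⊓ Subgroup.upperCentralSeries G i ≤ center G := by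
  induction i with
  | zero => simp
  | succ i ih =>
    exact inf_le_center_of_commutator_mem hKT hH hbasis
      (fun x hx y => Subgroup.mem_upperCentralSeries_succ_iff.mp hx y) ih

end InnBasis

section TransUpperCentralSeries

variable {G : Type u} [Group G]

theorem transUpperCentralSeries_zero : transUpperCentralSeries G 0 = ⊥ := by
  rw [transUpperCentralSeries, transUpperCentralSeriesAux, Ordinal.limitRecOn_zero]

theorem mem_transUpperCentralSeries_add_one {o : Ordinal.{u}} {x : G} :
    x ∈ transUpperCentralSeries G (o + 1) ↔ ∀ y, ⁅x, y⁆ ∈ transUpperCentralSeries G o := by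
  rw [transUpperCentralSeries, transUpperCentralSeriesAux, Ordinal.limitRecOn_add_one]
  rfl

theorem transUpperCentralSeries_of_isSuccLimit {o : Ordinal.{u}} (ho : Order.IsSuccLimit o) :
    transUpperCentralSeries G o =
      ⨆ (o' : Ordinal.{u}) (_ : o' < o), transUpperCentralSeries G o' := by
  rw [transUpperCentralSeries, transUpperCentralSeriesAux, Ordinal.limitRecOn_limit _ _ _ _ ho]
  rfl

theorem transUpperCentralSeries_le_add_one (o : Ordinal.{u}) :
    transUpperCentralSeries G o ≤ transUpperCentralSeries G (o + 1) := fun x hx =>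
  mem_transUpperCentralSeries_add_one.mpr fun y => by
    rw [show ⁅x, y⁆ = x * (y * x⁻¹ * y⁻¹) by group]
    exact mul_mem hx ((transUpperCentralSeriesAux G o).2.conj_mem _ (inv_mem hx) y)

theorem transUpperCentralSeries_monotone : Monotone (transUpperCentralSeries G) := by
  intro a b hab
  induction b using Ordinal.limitRecOn with
  | zero => rw [nonpos_iff_eq_zero.mp hab]
  | add_one b ih =>
    rcases hab.lt_or_eq with h | rfl
    · exact (ih (Order.lt_add_one_iff.mp h)).trans (transUpperCentralSeries_le_add_one b)
    · exact le_rfl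
  | limit b hb _ =>
    rcases hab.lt_or_eq with h | rfl
    · rw [transUpperCentralSeries_of_isSuccLimit hb]
      exact le_iSup₂_of_le a h le_rfl
    · exact le_rfl

theorem mem_transUpperCentralSeries_of_isSuccLimit {o : Ordinal.{u}} (ho : Order.IsSuccLimit o)
    {x : G} : x ∈ transUpperCentralSeries G o ↔ ∃ o' < o, x ∈ transUpperCentralSeries G o' := by
  have : Nonempty {o' // o' < o} := ⟨⟨0, ho.bot_lt⟩⟩
  have hdir : Directed (· ≤ ·) fun o' : {o' // o' < o} => transUpperCentralSeries G o' :=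
    Monotone.directed_le fun _ _ h => transUpperCentralSeries_monotone h
  rw [transUpperCentralSeries_of_isSuccLimit ho, iSup_subtype', mem_iSup_of_directed hdir]
  simp

theorem mem_hypercenter {x : G} : x ∈ hypercenter G ↔ ∃ o, x ∈ transUpperCentralSeries G o :=
  mem_iSup_of_directed transUpperCentralSeries_monotone.directed_le

variable {n : ℕ} {H K : Subgroup G} [K.Normal] (hKT : ∀ k ∈ K, IsPowTorsion n k)
  (hH : H ≤ (⊤ : Subgroup G).derivedPow n) (hbasis : centralizer (H : Set G) ≤ center G)
include hKT hH hbasis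

theorem inf_transUpperCentralSeries_le_center (o : Ordinal.{u}) :
    K ⊓ transUpperCentralSeries G o ≤ center G := by
  induction o using Ordinal.limitRecOn with
  | zero => simp [transUpperCentralSeries_zero]
  | add_one o ih =>
    exact inf_le_center_of_commutator_mem hKT hH hbasis
      (fun _ hx => mem_transUpperCentralSeries_add_one.mp hx) ih
  | limit o ho ih =>
    rintro k ⟨hkK, hk⟩
    obtain ⟨o', ho', hk'⟩ := (mem_transUpperCentralSeries_of_isSuccLimit ho).mp hk
    exact ih o' ho' ⟨hkK, hk'⟩

end TransUpperCentralSeries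

section Center

variable {n : ℕ}

theorem le_center_of_isHypercentral {G : Type u} [Group G] {H : Subgroup G}
    (hG : IsLocallyNilpotent G) (hhyp : IsHypercentral G) (hHT : ∀ h ∈ H, IsPowTorsion n h)
    (hH : H ≤ (⊤ : Subgroup G).derivedPow n) (hbasis : centralizer (H : Set G) ≤ center G) :
    H ≤ center G := by
  have := hG.powTorsion_normal n
  intro h hh
  obtain ⟨o, ho⟩ := mem_hypercenter.mp (hhyp ▸ mem_top h)
  exact inf_transUpperCentralSeries_le_center (K := hG.powTorsion n) (fun _ hk => hk) hH hbasis o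
    ⟨hHT h hh, ho⟩

theorem le_center_of_isNilpotent {G : Type*} [Group G] [Group.IsNilpotent G] {H : Subgroup G}
    (hHT : ∀ h ∈ H, IsPowTorsion n h) (hH : H ≤ (⊤ : Subgroup G).derivedPow n)
    (hbasis : centralizer (H : Set G) ≤ center G) : H ≤ center G := by
  have hG : IsLocallyNilpotent G := fun _ _ => inferInstance
  have := hG.powTorsion_normal n
  obtain ⟨c, hc⟩ := Group.IsNilpotent.nilpotent' (G := G)
  intro h hh
  exact inf_upperCentralSeries_le_center (K := hG.powTorsion n) (fun _ hk => hk) hH hbasis c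
    ⟨hHT h hh, hc ▸ mem_top h⟩

theorem le_center_of_finite {G : Type*} [Group G] {H : Subgroup G} [Finite H]
    (hG : IsLocallyNilpotent G) (hHT : ∀ h ∈ H, IsPowTorsion n h)
    (hH : H ≤ (⊤ : Subgroup G).derivedPow n) (hbasis : centralizer (H : Set G) ≤ center G) :
    H ≤ center G := by
  obtain ⟨M, hMfg, hHM, hHMD⟩ := exists_fg_le_derivedPow hH
  have := hG M hMfg
  have hD : H.subgroupOf M ≤ (⊤ : Subgroup M).derivedPow n := by
    rw [← map_le_map_iff_of_injective M.subtype_injective, subgroupOf_map_subtype,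
      map_subtype_derivedPow_top]
    exact inf_le_left.trans hHMD
  have hC : centralizer (H.subgroupOf M : Set M) ≤ center M := by
    intro z hz
    have hzG : (z : G) ∈ center G := hbasis <| mem_centralizer_iff.mpr fun h hh =>
      congrArg Subtype.val (mem_centralizer_iff.mp hz ⟨h, hHM hh⟩ hh)
    exact mem_center_iff.mpr fun g => Subtype.ext (mem_center_iff.mp hzG g)
  have hHZ : H.subgroupOf M ≤ center M :=
    le_center_of_isNilpotent (fun h hh => isPowTorsion_coe.mp (hHT _ hh)) hD hC
  -- `H` is abelian, so it lies in its own centralizer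
  intro h hh
  refine hbasis (mem_centralizer_iff.mpr fun g hg => ?_)
  exact congrArg Subtype.val (mem_center_iff.mp (hHZ (show ⟨h, hHM hh⟩ ∈ H.subgroupOf M from hh))
    ⟨g, hHM hg⟩)

end Center

theorem abelian_of_pi_subgroup_innBasis_general {G : Type u} [Group G]
    (hG : IsLocallyNilpotent G)
    (π : Finset ℕ) (n : ℕ) (hn : n = ∏ p ∈ π, p)
    (H : Subgroup G)
    (hHle : H ≤ commutator G ⊔ Subgroup.closure {g : G | ∃ x : G, x ^ n = g})
    (hHpi : ∀ h ∈ H, IsOfFinOrder h ∧ ∀ p : ℕ, p.Prime → p ∣ orderOf h → p ∈ π)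
    (hbasis : Subgroup.centralizer (H : Set G) = Subgroup.center G)
    (hcase : IsHypercentral G ∨ Finite H) :
    ∀ a b : G, a * b = b * a := by
  have hHT : ∀ h ∈ H, IsPowTorsion n h := fun h hh =>
    hn ▸ isPowTorsion_prod_of_orderOf (hHpi h hh).1 (hHpi h hh).2
  rw [← derivedPow_top] at hHle
  have hHZ : H ≤ center G := by
    rcases hcase with hhyp | hfin
    · exact le_center_of_isHypercentral hG hhyp hHT hHle hbasis.le
    · exact le_center_of_finite hG hHT hHle hbasis.le
  have htop : center G = ⊤ := hbasis ▸ centralizer_eq_top_iff_subset.mpr hHZ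
  intro a b
  exact mem_center_iff.mp (htop ▸ mem_top b) a

/-- Let `G` be a locally nilpotent group, `π` a finite set of primes and `n` the product
of the primes in `π`.  Assume that a `π`-subgroup `H` of `G'Gⁿ` is an Inn-basis of `G`.
If either `G` is hypercentral or `H` is finite, then `G` is abelian. -/
theorem abelian_of_pi_subgroup_innBasis {G : Type u} [Group G]
    (hG : IsLocallyNilpotent G)
    (π : Finset ℕ) (hπ : ∀ p ∈ π, p.Prime) (n : ℕ) (hn : n = ∏ p ∈ π, p)
    (H : Subgroup G)
    (hHle : H ≤ commutator G ⊔ Subgroup.closure {g : G | ∃ x : G, x ^ n = g})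
    (hHpi : ∀ h ∈ H, IsOfFinOrder h ∧ ∀ p : ℕ, p.Prime → p ∣ orderOf h → p ∈ π)
    (hbasis : Subgroup.centralizer (H : Set G) = Subgroup.center G)
    (hcase : IsHypercentral G ∨ Finite H) :
    ∀ a b : G, a * b = b * a :=
  abelian_of_pi_subgroup_innBasis_general hG π n hn H hHle hHpi hbasis hcase
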